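/- arXiv:2508.14915 — 4 statements merged into one kernel-verified Lean document; each statement's English description precedes it below -/
import Mathlib

section
/- Every 3-connected graph that is not bipartite contains an induced odd cycle C such that the graph obtained by deleting the vertices of C is connected. -/
open SimpleGraph

/-- `G` is `k`-connected: more than `k` vertices, and deleting any set of fewer than
`k` vertices leaves a connected graph. -/
def KConnected {V : Type*} (G : SimpleGraph V) (k : ℕ) : Prop :=
  k < Nat.card V ∧ ∀ S : Set V, S.Finite → S.ncard < k → (G.induce Sᶜ).Connected

/-- `G + xy`: the graph `G` with the edge `xy` added (equal to `G` if already present). -/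
def AddEdge {V : Type*} (G : SimpleGraph V) (x y : V) : SimpleGraph V :=
  G ⊔ SimpleGraph.fromEdgeSet {s(x, y)}

/-- `G` has a cycle of length `n`. -/
def HasCycleLength {V : Type*} (G : SimpleGraph V) (n : ℕ) : Prop :=
  ∃ (v : V) (c : G.Walk v v), c.IsCycle ∧ c.length = n

/-- `G` contains `k` cycles of consecutive lengths. -/
def HasConsecCycles {V : Type*} (G : SimpleGraph V) (k : ℕ) : Prop :=
  ∃ m : ℕ, ∀ i < k, HasCycleLength G (m + i)

/-!
Choose an induced odd cycle `C` and a component `H` of `G - C` of maximal size. Suppose `G - C`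
had another component `K`. If a path `A` along `C` and a walk through `K` close up to an odd
cycle, that cycle contains an induced odd cycle avoiding `H` and every attachment of `H` off `A`,
against the maximality of `H`. Hence, for two attachments of `K`, all attachments of `H` lie on
the arc of `C` between them of the right parity. If all attachments of `K` were attachments of
`H`, three of them would force `C` to be even. Otherwise `K` attaches strictly between two
consecutive attachments `p`, `q` of `H`; every component attached to the open arc from `p` to
`q` is then attached only to its closure, so `{p, q}` separates `G`, against 3-connectivity.
-/

namespace SimpleGraph

variable {V : Type*} {G : SimpleGraph V}

def ReachableIn (G : SimpleGraph V) (S : Set V) (a b : V) : Prop :=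
  ∃ w : G.Walk a b, ∀ x ∈ w.support, x ∈ S

namespace ReachableIn

variable {S : Set V} {a b c : V}

lemma mem_left (h : G.ReachableIn S a b) : a ∈ S :=
  h.elim fun w hw => hw a w.start_mem_support

lemma mem_right (h : G.ReachableIn S a b) : b ∈ S :=
  h.elim fun w hw => hw b w.end_mem_support

lemma refl (ha : a ∈ S) : G.ReachableIn S a a :=
  ⟨.nil, by simpa⟩

lemma symm (h : G.ReachableIn S a b) : G.ReachableIn S b a :=
  h.elim fun w hw => ⟨w.reverse, by simpa using hw⟩

lemma trans (h₁ : G.ReachableIn S a b) (h₂ : G.ReachableIn S b c) : G.ReachableIn S a c := by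
  obtain ⟨w₁, hw₁⟩ := h₁
  obtain ⟨w₂, hw₂⟩ := h₂
  refine ⟨w₁.append w₂, fun x hx => ?_⟩
  rcases (Walk.mem_support_append_iff w₁ w₂).mp hx with hx | hx
  exacts [hw₁ x hx, hw₂ x hx]

lemma of_adj (hadj : G.Adj a b) (ha : a ∈ S) (hb : b ∈ S) : G.ReachableIn S a b :=
  ⟨hadj.toWalk, by simp [ha, hb]⟩

lemma of_mem_support {w : G.Walk a b} (hw : ∀ x ∈ w.support, x ∈ S) {x : V}
    (hx : x ∈ w.support) : G.ReachableIn S a x := by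
  classical
  exact ⟨w.takeUntil x hx, fun y hy => hw y (w.support_takeUntil_subset_support hx hy)⟩

lemma mono_of_forall {T : Set V} (h : G.ReachableIn S a b)
    (hT : ∀ x, G.ReachableIn S a x → x ∈ T) : G.ReachableIn T a b :=
  h.elim fun w hw => ⟨w, fun x hx => hT x (.of_mem_support hw hx)⟩

end ReachableIn

lemma Connected.reachableIn {S : Set V} (h : (G.induce S).Connected) {a b : V} (ha : a ∈ S)
    (hb : b ∈ S) : G.ReachableIn S a b := by
  obtain ⟨w⟩ := h.preconnected ⟨a, ha⟩ ⟨b, hb⟩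
  let f : G.induce S →g G := ⟨Subtype.val, id⟩
  refine ⟨w.map f, fun x hx => ?_⟩
  rw [Walk.support_map] at hx
  obtain ⟨y, -, rfl⟩ := List.mem_map.mp hx
  exact y.2

lemma connected_induce_of_reachableIn {S : Set V} {a : V} (ha : a ∈ S)
    (h : ∀ b ∈ S, G.ReachableIn S a b) : (G.induce S).Connected := by
  rw [connected_iff_exists_forall_reachable]
  refine ⟨⟨a, ha⟩, fun ⟨b, hb⟩ => ?_⟩
  obtain ⟨w, hw⟩ := h b hb
  exact ⟨w.induce S hw⟩

namespace Walk

variable {u v : V} {i j : ℕ}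

def slice (w : G.Walk u v) (hij : i ≤ j) :
    G.Walk (w.getVert i) (w.getVert j) :=
  ((w.drop i).take (j - i)).copy rfl (by rw [drop_getVert, Nat.add_sub_cancel' hij])

def wrap (w : G.Walk u u) (i j : ℕ) : G.Walk (w.getVert j) (w.getVert i) :=
  (w.drop j).append (w.take i)

lemma length_slice (w : G.Walk u v) (hij : i ≤ j) (hj : j ≤ w.length) :
    (w.slice hij).length = j - i := by
  simp only [slice, length_copy, take_length, drop_length]
  omega

lemma length_wrap (w : G.Walk u u) (hi : i ≤ w.length) :
    (w.wrap i j).length = w.length - j + i := by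
  simp only [wrap, length_append, take_length, drop_length]
  omega

lemma exists_getVert_of_mem_support_slice {w : G.Walk u v} {hij : i ≤ j} {x : V}
    (hx : x ∈ (w.slice hij).support) : ∃ m, i ≤ m ∧ m ≤ j ∧ w.getVert m = x := by
  obtain ⟨n, rfl, -⟩ := mem_support_iff_exists_getVert.mp hx
  refine ⟨i + min (j - i) n, by omega, by omega, ?_⟩
  simp [slice]

lemma exists_getVert_of_mem_support_wrap {w : G.Walk u u} (hj : j ≤ w.length) {x : V}
    (hx : x ∈ (w.wrap i j).support) :
    ∃ m, m ≤ w.length ∧ (m ≤ i ∨ j ≤ m) ∧ w.getVert m = x := by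
  rcases (mem_support_append_iff _ _).mp hx with hx | hx
  · obtain ⟨n, rfl, hn⟩ := mem_support_iff_exists_getVert.mp hx
    rw [drop_length] at hn
    exact ⟨j + n, by omega, Or.inr (by omega), by simp⟩
  · obtain ⟨n, rfl, -⟩ := mem_support_iff_exists_getVert.mp hx
    by_cases hil : min i n ≤ w.length
    · exact ⟨min i n, hil, Or.inl (by omega), by simp⟩
    · exact ⟨0, by omega, Or.inl (by omega), by
        simp [w.getVert_of_length_le (show w.length ≤ min i n by omega)]⟩

lemma support_slice_subset (w : G.Walk u v) (hij : i ≤ j) :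
    (w.slice hij).support ⊆ w.support := fun _ hx => by
  obtain ⟨m, -, -, rfl⟩ := exists_getVert_of_mem_support_slice hx
  exact w.getVert_mem_support m

lemma support_wrap_subset (w : G.Walk u u) : (w.wrap i j).support ⊆ w.support := fun _ hx => by
  rcases (mem_support_append_iff _ _).mp hx with hx | hx <;>
    obtain ⟨n, rfl, -⟩ := mem_support_iff_exists_getVert.mp hx <;>
    simp [getVert_mem_support]

structure IsInducedOddCycle (c : G.Walk u u) : Prop where
  isCycle : c.IsCycle
  odd_length : Odd c.length
  isChordless : c.IsChordless

lemma exists_getVert_eq_of_mem_support {w : G.Walk u u} (hw : w.length ≠ 0) {x : V}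
    (hx : x ∈ w.support) : ∃ i < w.length, w.getVert i = x := by
  obtain ⟨n, rfl, hn⟩ := mem_support_iff_exists_getVert.mp hx
  rcases hn.lt_or_eq with hn | rfl
  · exact ⟨n, hn, rfl⟩
  · exact ⟨0, by omega, by simp⟩

lemma exists_odd_of_split {w : G.Walk u u} (hw : Odd w.length) (hij : i ≤ j)
    (hj : j ≤ w.length) (p : G.Walk (w.getVert j) (w.getVert i)) (hp : p.support ⊆ w.support) :
    ∃ (v : V) (w' : G.Walk v v), Odd w'.length ∧ w'.support ⊆ w.support ∧
      (w'.length = j - i + p.length ∨ w'.length = w.length - (j - i) + p.length) := by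
  have hsub {x y z : V} {q : G.Walk x y} {r : G.Walk y z} (hq : q.support ⊆ w.support)
      (hr : r.support ⊆ w.support) : (q.append r).support ⊆ w.support := fun a ha => by
    rcases (mem_support_append_iff q r).mp ha with ha | ha
    exacts [hq ha, hr ha]
  have hlen₁ := (w.slice hij).length_append p
  have hlen₂ := (w.wrap i j).length_append p.reverse
  rw [length_slice w hij hj] at hlen₁
  rw [length_wrap w (by omega), length_reverse] at hlen₂
  rcases Nat.even_or_odd (j - i + p.length) with he | ho
  · refine ⟨_, (w.wrap i j).append p.reverse, ?_, hsub w.support_wrap_subset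
      (by simpa using hp), Or.inr (by omega)⟩
    rw [hlen₂, show w.length - j + i + p.length = w.length + (j - i + p.length) - 2 * (j - i)
      by omega]
    exact Nat.odd_sub (by omega) |>.mpr (by simp [hw, he, parity_simps])
  · exact ⟨_, (w.slice hij).append p, by rwa [hlen₁], hsub (w.support_slice_subset hij) hp,
      Or.inl hlen₁⟩

lemma isCycle_of_minimal {w : G.Walk u u} (hw : Odd w.length)
    (hmin : ∀ (v : V) (w' : G.Walk v v), Odd w'.length → w'.support ⊆ w.support →
      w.length ≤ w'.length) : w.IsCycle := by
  have hne : ∀ n m, n < m → m + 1 ≤ w.length → w.getVert (n + 1) ≠ w.getVert (m + 1) := by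
    intro n m hnm hm h
    obtain ⟨v, w', hodd, hsub, hlen⟩ := exists_odd_of_split hw (by omega : n + 1 ≤ m + 1) hm
      (nil.copy rfl h.symm) (by simp [getVert_mem_support])
    have := hmin v w' hodd hsub
    simp only [length_copy, length_nil, add_zero] at hlen
    omega
  have hl1 : w.length ≠ 1 := fun h1 => by
    simpa [← h1] using w.adj_getVert_succ (i := 0) (by omega)
  refine isCycle_iff_isPath_tail_and_le_length.mpr ⟨(IsPath.getVert_injOn_iff _).mp ?_, ?_⟩
  · intro n hn m hm h
    simp only [Set.mem_ofPred_eq, length_tail, getVert_tail] at hn hm h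
    rcases Nat.lt_trichotomy n m with hnm | rfl | hnm
    · exact absurd h (hne n m hnm (by omega))
    · rfl
    · exact absurd h.symm (hne m n hnm (by omega))
  · obtain ⟨k, hk⟩ := hw
    omega

lemma isChordless_of_minimal {w : G.Walk u u} (hw : Odd w.length)
    (hmin : ∀ (v : V) (w' : G.Walk v v), Odd w'.length → w'.support ⊆ w.support →
      w.length ≤ w'.length) : w.IsChordless := by
  have hedge : ∀ i j, i < j → j < w.length → G.Adj (w.getVert i) (w.getVert j) →
      s(w.getVert i, w.getVert j) ∈ w.edges := by
    intro i j hij hj hadj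
    rw [mk_mem_edges_iff_exists]
    by_cases hnext : j = i + 1
    · exact ⟨i, by omega, by rw [hnext]⟩
    by_cases hlast : i = 0 ∧ j + 1 = w.length
    · refine ⟨j, hj, ?_⟩
      rw [hlast.2, getVert_length, hlast.1, getVert_zero, Sym2.eq_swap]
    obtain ⟨v, w', hodd, hsub, hlen⟩ := exists_odd_of_split hw hij.le hj.le hadj.symm.toWalk
      (by simp [getVert_mem_support, List.subset_def])
    have := hmin v w' hodd hsub
    simp only [Adj.length_toWalk] at hlen
    omega
  rw [isChordless_iff_forall_mem_edges]
  intro a b ha hb hadj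
  have hl : w.length ≠ 0 := fun h => by simp [h] at hw
  obtain ⟨i, hi, rfl⟩ := exists_getVert_eq_of_mem_support hl ha
  obtain ⟨j, hj, rfl⟩ := exists_getVert_eq_of_mem_support hl hb
  rcases Nat.lt_trichotomy i j with hij | rfl | hij
  · exact hedge i j hij hj hadj
  · exact absurd hadj G.irrefl
  · rw [Sym2.eq_swap]
    exact hedge j i hij hi hadj.symm

theorem exists_isInducedOddCycle {w : G.Walk u u} (hw : Odd w.length) :
    ∃ (v : V) (c : G.Walk v v), c.IsInducedOddCycle ∧ c.support ⊆ w.support := by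
  classical
  have hex : ∃ n, ∃ (v : V) (c : G.Walk v v), Odd c.length ∧ c.support ⊆ w.support ∧
      c.length = n := ⟨_, u, w, hw, List.Subset.refl _, rfl⟩
  obtain ⟨v, c, hodd, hsub, hlen⟩ := Nat.find_spec hex
  have hmin : ∀ (v' : V) (c' : G.Walk v' v'), Odd c'.length → c'.support ⊆ c.support →
      c.length ≤ c'.length := fun v' c' hodd' hsub' =>
    hlen ▸ Nat.find_min' hex ⟨v', c', hodd', List.Subset.trans hsub' hsub, rfl⟩
  exact ⟨v, c, ⟨isCycle_of_minimal hodd hmin, hodd, isChordless_of_minimal hodd hmin⟩, hsub⟩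

variable {c : G.Walk u u}

lemma IsCycle.getVert_eq_getVert_iff (hc : c.IsCycle) (hi : i ≤ c.length) (hj : j < c.length) :
    c.getVert i = c.getVert j ↔ i = j ∨ i = c.length ∧ j = 0 := by
  refine ⟨fun h => ?_, ?_⟩
  · rcases hi.lt_or_eq with hi | rfl
    · exact .inl (hc.getVert_injOn' (by simp; omega) (by simp; omega) h)
    · rw [getVert_length, eq_comm, hc.getVert_endpoint_iff hj.le] at h
      omega
  · rintro (rfl | ⟨rfl, rfl⟩) <;> simp

lemma IsCycle.adj_getVert (hc : c.IsCycle) (hch : c.IsChordless) (hi : i < c.length)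
    (hj : j < c.length) (hadj : G.Adj (c.getVert i) (c.getVert j)) :
    j = i + 1 ∨ i = j + 1 ∨ (i = 0 ∧ j + 1 = c.length) ∨ (j = 0 ∧ i + 1 = c.length) := by
  obtain ⟨k, hk, he⟩ := (mk_mem_edges_iff_exists c).mp
    (hch.mem_edges (c.getVert_mem_support i) (c.getVert_mem_support j) hadj)
  rcases Sym2.eq_iff.mp he with ⟨h₁, h₂⟩ | ⟨h₁, h₂⟩
  · rw [hc.getVert_eq_getVert_iff hk.le hi] at h₁
    rw [hc.getVert_eq_getVert_iff hk hj] at h₂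
    omega
  · rw [hc.getVert_eq_getVert_iff hk.le hj] at h₁
    rw [hc.getVert_eq_getVert_iff hk hi] at h₂
    omega

lemma IsCycle.exists_getVert_eq (hc : c.IsCycle) {x : V} (hx : x ∈ c.support) :
    ∃ i < c.length, c.getVert i = x :=
  exists_getVert_eq_of_mem_support (by have := hc.three_le_length; omega) hx

/-- The component of `G - c` containing `a` (empty if `a` lies on `c`). -/
def componentCompl (c : G.Walk u u) (a : V) : Set V :=
  {b | G.ReachableIn {x | x ∉ c.support} a b}

def IsAttachment (c : G.Walk u u) (a : V) (t : ℕ) : Prop :=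
  ∃ k ∈ c.componentCompl a, G.Adj (c.getVert t) k

def HasLargestComponentCompl (c : G.Walk u u) (a : V) : Prop :=
  ∀ (v : V) (c' : G.Walk v v) (b : V), c'.IsInducedOddCycle →
    (c'.componentCompl b).ncard ≤ (c.componentCompl a).ncard

variable {a b : V}

lemma notMem_support_of_mem_componentCompl {x : V} (hx : x ∈ c.componentCompl a) :
    x ∉ c.support :=
  ReachableIn.mem_right hx

lemma IsAttachment.exists_walk {t : ℕ} (h : c.IsAttachment b t) :
    ∃ P : G.Walk (c.getVert t) b,
      ∀ z ∈ P.support, z ∈ c.componentCompl b ∨ z = c.getVert t := by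
  obtain ⟨k, ⟨w, hw⟩, hadj⟩ := h
  refine ⟨.cons hadj w.reverse, fun z hz => ?_⟩
  rw [support_cons, List.mem_cons, support_reverse, List.mem_reverse] at hz
  exact hz.elim .inr fun hz => .inl (.of_mem_support hw hz)

/-- The odd closed walk `A + W` contains an induced odd cycle avoiding the component `H` of `a`
and the attachment `t` of `H`, so that `H` together with `t` lies in one component of its
complement. -/
lemma HasLargestComponentCompl.false_of_odd [Finite V] (hmax : c.HasLargestComponentCompl a)
    (hb : b ∉ c.componentCompl a) {x y : V} (A W : G.Walk x y)
    (hodd : Odd (A.length + W.length)) (hA : A.support ⊆ c.support)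
    (hW : ∀ z ∈ W.support, z ∈ c.componentCompl b ∨ z = x ∨ z = y) {t : ℕ}
    (ht : c.IsAttachment a t) (htA : c.getVert t ∉ A.support) : False := by
  obtain ⟨v, c₁, hc₁, hsub⟩ := exists_isInducedOddCycle (w := A.append W.reverse)
    (by rwa [length_append, length_reverse])
  have hoff : ∀ z ∉ c.componentCompl b, z ∉ A.support → z ∉ c₁.support := by
    intro z hzK hzA hz
    rcases (mem_support_append_iff _ _).mp (hsub hz) with hz | hz
    · exact hzA hz
    · rw [support_reverse, List.mem_reverse] at hz
      rcases hW z hz with hz | rfl | rfl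
      exacts [hzK hz, hzA A.start_mem_support, hzA A.end_mem_support]
  have hH : ∀ z ∈ c.componentCompl a, z ∉ c₁.support := fun z hz =>
    hoff z (fun hzK => hb (ReachableIn.trans hz (ReachableIn.symm hzK)))
      (fun hzA => notMem_support_of_mem_componentCompl hz (hA hzA))
  have hsub₁ : c.componentCompl a ⊆ c₁.componentCompl a := fun z hz =>
    ReachableIn.mono_of_forall hz hH
  obtain ⟨k, hk, hadj⟩ := ht
  have htc : c.getVert t ∉ c.componentCompl a := fun h =>
    notMem_support_of_mem_componentCompl h (c.getVert_mem_support t)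
  have ht₁ : c.getVert t ∈ c₁.componentCompl a :=
    ReachableIn.trans (hsub₁ hk) (.of_adj hadj.symm (hH k hk)
      (hoff _ (fun h => notMem_support_of_mem_componentCompl h (c.getVert_mem_support t)) htA))
  have := hmax v c₁ a hc₁
  have := Set.ncard_le_ncard (Set.insert_subset ht₁ hsub₁) (Set.toFinite _)
  rw [Set.ncard_insert_of_notMem htc (Set.toFinite _)] at this
  omega

lemma HasLargestComponentCompl.mem_odd_arc [Finite V] (hmax : c.HasLargestComponentCompl a)
    (hc : c.IsCycle) (hb : b ∉ c.componentCompl a) {i j : ℕ} (hij : i ≤ j) (hj : j < c.length)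
    {P : G.Walk (c.getVert i) b} {Q : G.Walk (c.getVert j) b}
    (hP : ∀ z ∈ P.support, z ∈ c.componentCompl b ∨ z = c.getVert i)
    (hQ : ∀ z ∈ Q.support, z ∈ c.componentCompl b ∨ z = c.getVert j) {t : ℕ}
    (ht : t < c.length) (hat : c.IsAttachment a t) :
    (Odd (P.length + Q.length + (j - i)) → i ≤ t ∧ t ≤ j) ∧
      (Odd (P.length + Q.length + (c.length - (j - i))) → t ≤ i ∨ j ≤ t) := by
  have hW : ∀ z ∈ (P.append Q.reverse).support,
      z ∈ c.componentCompl b ∨ z = c.getVert i ∨ z = c.getVert j := by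
    intro z hz
    rcases (mem_support_append_iff _ _).mp hz with hz | hz
    · exact (hP z hz).imp_right .inl
    · rw [support_reverse, List.mem_reverse] at hz
      exact (hQ z hz).imp_right .inr
  have hWlen : (P.append Q.reverse).length = P.length + Q.length := by
    rw [length_append, length_reverse]
  have hidx {m : ℕ} (hm : m ≤ c.length) (h : c.getVert m = c.getVert t) :
      m = t ∨ m = c.length ∧ t = 0 :=
    (hc.getVert_eq_getVert_iff hm ht).mp h
  constructor
  · intro hodd
    by_contra hout
    refine hmax.false_of_odd hb (c.slice hij) _ ?_ (c.support_slice_subset hij) hW hat ?_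
    · rwa [length_slice c hij hj.le, hWlen, add_comm]
    · intro hmem
      obtain ⟨m, him, hmj, hm⟩ := exists_getVert_of_mem_support_slice hmem
      have := hidx (by omega) hm
      omega
  · intro hodd
    by_contra hin
    refine hmax.false_of_odd hb (c.wrap i j).reverse _ ?_ ?_ hW hat ?_
    · rw [length_reverse, length_wrap c (by omega), hWlen]
      convert hodd using 1
      omega
    · simpa using c.support_wrap_subset
    · intro hmem
      rw [support_reverse, List.mem_reverse] at hmem
      obtain ⟨m, hml, him, hm⟩ := exists_getVert_of_mem_support_wrap hj.le hmem
      have := hidx hml hm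
      omega

end Walk

end SimpleGraph

lemma Set.ncard_pair_lt_three {α : Type*} (x y : α) : ({x, y} : Set α).ncard < 3 :=
  (Set.ncard_insert_le x {y}).trans_lt (by simp)

namespace KConnected

variable {V : Type*} {G : SimpleGraph V} {u : V} {c : G.Walk u u} {a b : V}

open Walk

lemma exists_adj_of_mem_of_notMem (h3 : KConnected G 3) {Z : Set V} {x y : V}
    (ha : a ∈ Z) (hb : b ∉ Z) (hax : a ∉ ({x, y} : Set V)) (hbx : b ∉ ({x, y} : Set V)) :
    ∃ z ∈ Z, ∃ z' ∉ Z, z' ∉ ({x, y} : Set V) ∧ G.Adj z z' := by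
  obtain ⟨w, hw⟩ :=
    (h3.2 {x, y} (Set.toFinite _) (Set.ncard_pair_lt_three x y)).reachableIn hax hbx
  obtain ⟨d, hd, hdZ, hdZ'⟩ := w.exists_boundary_dart Z ha hb
  exact ⟨d.fst, hdZ, d.snd, hdZ', hw _ (w.dart_snd_mem_support_of_mem_darts hd), d.adj⟩

/-- A vertex of an induced cycle has only two neighbours on it, but at least three in `G`. -/
lemma exists_notMem_support (h3 : KConnected G 3)
    (hc : c.IsCycle) (hch : c.IsChordless) : ∃ a, a ∉ c.support := by
  by_contra! hall
  have hl := hc.three_le_length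
  have hne : ∀ i < 3, ∀ j < 3, c.getVert i = c.getVert j → i = j := fun i hi j hj h => by
    have := (hc.getVert_eq_getVert_iff (i := i) (j := j) (by omega) (by omega)).mp h
    omega
  obtain ⟨b, hb⟩ : ∃ b, b ∉ ({c.getVert 1, c.getVert 0, c.getVert 2} : Set V) := by
    by_contra! hb
    have := h3.1
    rw [← Set.ncard_univ, ← Set.eq_univ_of_forall hb] at this
    have := Set.ncard_insert_le (c.getVert 1) {c.getVert 0, c.getVert 2}
    have := Set.ncard_pair_lt_three (c.getVert 0) (c.getVert 2)
    omega
  simp only [Set.mem_insert_iff, Set.mem_singleton_iff, not_or] at hb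
  obtain ⟨z, rfl, z', hz', hz'0, hadj⟩ := h3.exists_adj_of_mem_of_notMem
    (Z := {c.getVert 1}) (x := c.getVert 0) (y := c.getVert 2) rfl hb.1
    (by
      simp only [Set.mem_insert_iff, Set.mem_singleton_iff, not_or]
      exact ⟨fun h => by simpa using hne 1 (by omega) 0 (by omega) h,
        fun h => by simpa using hne 1 (by omega) 2 (by omega) h⟩)
    (by
      simp only [Set.mem_insert_iff, Set.mem_singleton_iff, not_or]
      exact ⟨hb.2.1, hb.2.2⟩)
  obtain ⟨r, hr, rfl⟩ := hc.exists_getVert_eq (hall z')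
  simp only [Set.mem_singleton_iff, Set.mem_insert_iff, not_or] at hz' hz'0
  rcases hc.adj_getVert hch (by omega) hr hadj with rfl | h | h | h
  · exact hz'0.2 rfl
  · obtain rfl : r = 0 := by omega
    exact hz'0.1 rfl
  · omega
  · omega

lemma exists_isAttachment_ne (h3 : KConnected G 3) (hc : c.IsCycle) (ha : a ∉ c.support)
    (hb : b ∉ c.support) (hab : b ∉ c.componentCompl a) {x y : V} (hx : x ∈ c.support)
    (hy : y ∈ c.support) :
    ∃ t < c.length, c.IsAttachment a t ∧ c.getVert t ≠ x ∧ c.getVert t ≠ y := by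
  have hxy {z : V} (hz : z ∉ c.support) : z ∉ ({x, y} : Set V) := by
    rintro (rfl | rfl | _) <;> contradiction
  obtain ⟨z, hz, z', hz', hz'xy, hadj⟩ :=
    h3.exists_adj_of_mem_of_notMem (ReachableIn.refl ha) hab (hxy ha) (hxy hb)
  have hz'c : z' ∈ c.support := by
    by_contra hz'c
    exact hz' (hz.trans (.of_adj hadj (notMem_support_of_mem_componentCompl hz) hz'c))
  obtain ⟨t, ht, rfl⟩ := hc.exists_getVert_eq hz'c
  simp only [Set.mem_insert_iff, Set.mem_singleton_iff, not_or] at hz'xy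
  exact ⟨t, ht, ⟨z, hz, hadj.symm⟩, hz'xy⟩

end KConnected

/-- `r` lies on the open arc from `p` up to `q` of the cycle `0, 1, …, ℓ - 1`, wrapping around
after `ℓ - 1`; for `p = q` this arc is everything but `p`. -/
def CyclicIoo (p q r : ℕ) : Prop :=
  (p < q ∧ p < r ∧ r < q) ∨ (q ≤ p ∧ (p < r ∨ r < q))

def CyclicIcc (p q r : ℕ) : Prop :=
  r = p ∨ r = q ∨ CyclicIoo p q r

lemma Finset.exists_cyclicIoo_gap {I : Finset ℕ} (hI : I.Nonempty) {s : ℕ} (hs : s ∉ I) :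
    ∃ p ∈ I, ∃ q ∈ I, CyclicIoo p q s ∧ ∀ t ∈ I, ¬ CyclicIoo p q t := by
  unfold CyclicIoo
  by_cases hsides : (I.filter (· < s)).Nonempty ∧ (I.filter (s < ·)).Nonempty
  · obtain ⟨hbelow, habove⟩ := hsides
    obtain ⟨hp, hps⟩ := Finset.mem_filter.mp ((I.filter (· < s)).max'_mem hbelow)
    obtain ⟨hq, hsq⟩ := Finset.mem_filter.mp ((I.filter (s < ·)).min'_mem habove)
    refine ⟨_, hp, _, hq, .inl ⟨by omega, hps, hsq⟩, fun t ht => ?_⟩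
    rcases lt_trichotomy t s with h | rfl | h
    · have := (I.filter (· < s)).le_max' t (Finset.mem_filter.mpr ⟨ht, h⟩)
      omega
    · exact absurd ht hs
    · have := (I.filter (s < ·)).min'_le t (Finset.mem_filter.mpr ⟨ht, h⟩)
      omega
  · refine ⟨_, I.max'_mem hI, _, I.min'_mem hI, .inr ⟨I.min'_le _ (I.max'_mem hI), ?_⟩,
      fun t ht => ?_⟩
    · have hmax : s ≠ I.max' hI := fun h => hs (h ▸ I.max'_mem hI)
      have hmin : s ≠ I.min' hI := fun h => hs (h ▸ I.min'_mem hI)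
      by_contra! h
      exact hsides ⟨⟨_, Finset.mem_filter.mpr ⟨I.min'_mem hI, by omega⟩⟩,
        ⟨_, Finset.mem_filter.mpr ⟨I.max'_mem hI, by omega⟩⟩⟩
    · have := I.le_max' t ht
      have := I.min'_le t ht
      omega

namespace SimpleGraph.Walk

variable {V : Type*} {G : SimpleGraph V} {u : V} {c : G.Walk u u} {a b : V}

/-- Otherwise take three attachments `i < j < k` of the component of `b`: each pair closes
through that component to an even cycle with the arc of `c` avoiding the third one, and these
three arcs cover `c` once, so `c` would be even. -/
lemma HasLargestComponentCompl.exists_isAttachment_not_isAttachment [Finite V]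
    (h3 : KConnected G 3) (hmax : c.HasLargestComponentCompl a) (hc : c.IsInducedOddCycle)
    (ha : a ∉ c.support) (hb : b ∉ c.support) (hab : b ∉ c.componentCompl a) :
    ∃ s < c.length, c.IsAttachment b s ∧ ¬ c.IsAttachment a s := by
  classical
  by_contra! hsh
  have hba : a ∉ c.componentCompl b := fun h => hab (ReachableIn.symm h)
  set I := (Finset.range c.length).filter (c.IsAttachment b)
  have hmemI {t : ℕ} : t ∈ I ↔ t < c.length ∧ c.IsAttachment b t := by simp [I]
  obtain ⟨t₀, ht₀, hat₀, -⟩ :=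
    h3.exists_isAttachment_ne hc.isCycle hb ha hba c.start_mem_support c.start_mem_support
  have hI : I.Nonempty := ⟨t₀, hmemI.mpr ⟨ht₀, hat₀⟩⟩
  obtain ⟨hil, hib⟩ := hmemI.mp (I.min'_mem hI)
  obtain ⟨hkl, hkb⟩ := hmemI.mp (I.max'_mem hI)
  set i := I.min' hI
  set k := I.max' hI
  obtain ⟨j, hjl, hjb, hji, hjk⟩ := h3.exists_isAttachment_ne hc.isCycle hb ha hba
    (c.getVert_mem_support i) (c.getVert_mem_support k)
  have hij : i < j := lt_of_le_of_ne (I.min'_le j (hmemI.mpr ⟨hjl, hjb⟩))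
    (fun h => hji (h ▸ rfl))
  have hjk : j < k := lt_of_le_of_ne (I.le_max' j (hmemI.mpr ⟨hjl, hjb⟩))
    (fun h => hjk (h ▸ rfl))
  obtain ⟨P, hP⟩ := hib.exists_walk
  obtain ⟨Q, hQ⟩ := hjb.exists_walk
  obtain ⟨R, hR⟩ := hkb.exists_walk
  have e₁ := (hmax.mem_odd_arc hc.isCycle hab hij.le hjl hP hQ hkl (hsh k hkl hkb)).1
  have e₂ := (hmax.mem_odd_arc hc.isCycle hab hjk.le hkl hQ hR hil (hsh i hil hib)).1
  have e₃ := (hmax.mem_odd_arc hc.isCycle hab (hij.trans hjk).le hkl hP hR hjl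
    (hsh j hjl hjb)).2
  have hodd := hc.odd_length
  simp only [Nat.odd_iff] at e₁ e₂ e₃ hodd
  omega

lemma HasLargestComponentCompl.cyclicIcc_of_isAttachment [Finite V]
    (hmax : c.HasLargestComponentCompl a) (hc : c.IsInducedOddCycle) {p q : ℕ}
    (hp : p < c.length) (hq : q < c.length) (hap : c.IsAttachment a p)
    (haq : c.IsAttachment a q) (hab : b ∉ c.componentCompl a) {s : ℕ} (hs : s < c.length)
    (hsgap : CyclicIoo p q s) (hbs : c.IsAttachment b s) {r : ℕ} (hr : r < c.length)
    (hbr : c.IsAttachment b r) : CyclicIcc p q r := by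
  have hodd := Nat.odd_iff.mp hc.odd_length
  have hsides {i j : ℕ} (hij : i < j) (hj : j < c.length) (hbi : c.IsAttachment b i)
      (hbj : c.IsAttachment b j) :
      (i ≤ p ∧ p ≤ j ∧ i ≤ q ∧ q ≤ j) ∨ ((p ≤ i ∨ j ≤ p) ∧ (q ≤ i ∨ j ≤ q)) := by
    obtain ⟨P, hP⟩ := hbi.exists_walk
    obtain ⟨Q, hQ⟩ := hbj.exists_walk
    have ep := hmax.mem_odd_arc hc.isCycle hab hij.le hj hP hQ hp hap
    have eq := hmax.mem_odd_arc hc.isCycle hab hij.le hj hP hQ hq haq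
    rcases Nat.even_or_odd (P.length + Q.length + (j - i)) with he | ho
    · have ho : Odd (P.length + Q.length + (c.length - (j - i))) := by
        rw [Nat.odd_iff]; rw [Nat.even_iff] at he; omega
      exact .inr ⟨ep.2 ho, eq.2 ho⟩
    · exact .inl ⟨(ep.1 ho).1, (ep.1 ho).2, (eq.1 ho).1, (eq.1 ho).2⟩
  unfold CyclicIcc
  unfold CyclicIoo at hsgap ⊢
  rcases lt_trichotomy r s with h | rfl | h
  · have := hsides h hs hbr hbs
    omega
  · omega
  · have := hsides h hr hbs hbr
    omega

def gapSet (c : G.Walk u u) (p q : ℕ) : Set V :=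
  {x | (∃ r < c.length, CyclicIoo p q r ∧ c.getVert r = x) ∨
    (x ∉ c.support ∧ ∀ r < c.length, c.IsAttachment x r → CyclicIcc p q r)}

lemma HasLargestComponentCompl.mem_gapSet_of_adj [Finite V]
    (hmax : c.HasLargestComponentCompl a) (hc : c.IsInducedOddCycle) {p q : ℕ}
    (hp : p < c.length) (hq : q < c.length) (hap : c.IsAttachment a p)
    (haq : c.IsAttachment a q) (hgap : ∀ t < c.length, c.IsAttachment a t → ¬ CyclicIoo p q t)
    {z z' : V} (hz : z ∈ c.gapSet p q) (hadj : G.Adj z z') (hz'p : z' ≠ c.getVert p)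
    (hz'q : z' ≠ c.getVert q) : z' ∈ c.gapSet p q := by
  have hidx {r : ℕ} (hr : c.getVert r = z') : r ≠ p ∧ r ≠ q :=
    ⟨fun h => hz'p (h ▸ hr.symm), fun h => hz'q (h ▸ hr.symm)⟩
  rcases hz with ⟨r, hr, hrgap, rfl⟩ | ⟨hzc, hzatt⟩
  · by_cases hz'c : z' ∈ c.support
    · obtain ⟨r', hr', rfl⟩ := hc.isCycle.exists_getVert_eq hz'c
      have := hc.isCycle.adj_getVert hc.isChordless hr hr' hadj
      have := hidx rfl
      refine .inl ⟨r', hr', ?_, rfl⟩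
      unfold CyclicIoo at hrgap ⊢
      omega
    · have hz'a : z' ∉ c.componentCompl a := fun h => hgap r hr ⟨z', h, hadj⟩ hrgap
      exact .inr ⟨hz'c, fun r' hr' hatt => hmax.cyclicIcc_of_isAttachment hc hp hq hap haq
        hz'a hr hrgap ⟨z', .refl hz'c, hadj⟩ hr' hatt⟩
  · by_cases hz'c : z' ∈ c.support
    · obtain ⟨r', hr', rfl⟩ := hc.isCycle.exists_getVert_eq hz'c
      have hr'p := hidx rfl
      refine .inl ⟨r', hr', ?_, rfl⟩
      rcases hzatt r' hr' ⟨z, .refl hzc, hadj.symm⟩ with h | h | h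
      exacts [absurd h hr'p.1, absurd h hr'p.2, h]
    · refine .inr ⟨hz'c, fun r hr ⟨k, hk, hadjk⟩ => hzatt r hr ⟨k, ?_, hadjk⟩⟩
      exact ReachableIn.trans (.of_adj hadj hzc hz'c) hk

/-- Otherwise the component of `b` attaches strictly between two consecutive attachments `p`,
`q` of the component of `a`, and `{p, q}` would separate `c.gapSet p q` from `a`. -/
lemma HasLargestComponentCompl.isAttachment_of_isAttachment [Finite V] (h3 : KConnected G 3)
    (hmax : c.HasLargestComponentCompl a) (hc : c.IsInducedOddCycle) (ha : a ∉ c.support)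
    (hab : b ∉ c.componentCompl a) {s : ℕ} (hs : s < c.length) (hbs : c.IsAttachment b s) :
    c.IsAttachment a s := by
  classical
  by_contra has
  have hb : b ∉ c.support := hbs.elim fun _ hk => ReachableIn.mem_left hk.1
  set I := (Finset.range c.length).filter (c.IsAttachment a)
  have hmemI {t : ℕ} : t ∈ I ↔ t < c.length ∧ c.IsAttachment a t := by simp [I]
  obtain ⟨t₀, ht₀, hat₀, -⟩ :=
    h3.exists_isAttachment_ne hc.isCycle ha hb hab c.start_mem_support c.start_mem_support
  obtain ⟨p, hpI, q, hqI, hsgap, hgap⟩ := Finset.exists_cyclicIoo_gap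
    ⟨t₀, hmemI.mpr ⟨ht₀, hat₀⟩⟩ (s := s) (fun h => has (hmemI.mp h).2)
  obtain ⟨hp, hap⟩ := hmemI.mp hpI
  obtain ⟨hq, haq⟩ := hmemI.mp hqI
  have hgap' : ∀ t < c.length, c.IsAttachment a t → ¬ CyclicIoo p q t :=
    fun t ht hat => hgap t (hmemI.mpr ⟨ht, hat⟩)
  have hbZ : b ∈ c.gapSet p q := .inr ⟨hb, fun r hr hbr =>
    hmax.cyclicIcc_of_isAttachment hc hp hq hap haq hab hs hsgap hbs hr hbr⟩
  have haZ : a ∉ c.gapSet p q := by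
    rintro (⟨r, -, -, rfl⟩ | ⟨-, hconf⟩)
    · exact ha (c.getVert_mem_support r)
    obtain ⟨t, ht, hat, htp, htq⟩ := h3.exists_isAttachment_ne hc.isCycle ha hb hab
      (c.getVert_mem_support p) (c.getVert_mem_support q)
    rcases hconf t ht hat with rfl | rfl | h
    exacts [htp rfl, htq rfl, hgap' t ht hat h]
  have hoff {x : V} (hx : x ∉ c.support) : x ∉ ({c.getVert p, c.getVert q} : Set V) := by
    rintro (rfl | rfl | _) <;> exact hx (c.getVert_mem_support _)
  obtain ⟨z, hz, z', hz', hz'pq, hadj⟩ :=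
    h3.exists_adj_of_mem_of_notMem hbZ haZ (hoff hb) (hoff ha)
  simp only [Set.mem_insert_iff, Set.mem_singleton_iff, not_or] at hz'pq
  exact hz' (hmax.mem_gapSet_of_adj hc hp hq hap haq hgap' hz hadj hz'pq.1 hz'pq.2)

theorem HasLargestComponentCompl.connected_induce [Finite V] (h3 : KConnected G 3)
    (hmax : c.HasLargestComponentCompl a) (hc : c.IsInducedOddCycle) (ha : a ∉ c.support) :
    (G.induce {x | x ∉ c.support}).Connected := by
  refine connected_induce_of_reachableIn ha fun b hb => ?_
  by_contra hab
  obtain ⟨s, hs, hbs, has⟩ := hmax.exists_isAttachment_not_isAttachment h3 hc ha hb hab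
  exact has (hmax.isAttachment_of_isAttachment h3 hc ha hab hs hbs)

theorem exists_hasLargestComponentCompl [Finite V] {v₀ : V} {c₀ : G.Walk v₀ v₀}
    (hc₀ : c₀.IsInducedOddCycle) {a₀ : V} (ha₀ : a₀ ∉ c₀.support) :
    ∃ (v : V) (c : G.Walk v v) (a : V), c.IsInducedOddCycle ∧ a ∉ c.support ∧
      c.HasLargestComponentCompl a := by
  set N := {n | ∃ (v : V) (c : G.Walk v v) (a : V), c.IsInducedOddCycle ∧
    n = (c.componentCompl a).ncard}
  have hbdd : BddAbove N := ⟨Nat.card V, by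
    rintro _ ⟨v, c, a, -, rfl⟩
    exact (Set.ncard_le_ncard (Set.subset_univ _)).trans_eq (Set.ncard_univ V)⟩
  have hne : N.Nonempty := ⟨_, v₀, c₀, a₀, hc₀, rfl⟩
  obtain ⟨v, c, a, hc, hN⟩ := Nat.sSup_mem hne hbdd
  have hpos : 0 < (c.componentCompl a).ncard := by
    rw [← hN]
    exact (Set.ncard_pos (Set.toFinite _)).mpr ⟨a₀, .refl ha₀⟩ |>.trans_le
      (le_csSup hbdd ⟨v₀, c₀, a₀, hc₀, rfl⟩)
  obtain ⟨x, hx⟩ := (Set.ncard_pos (Set.toFinite _)).mp hpos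
  exact ⟨v, c, a, hc, ReachableIn.mem_left hx, fun v' c' b hc' => hN ▸
    le_csSup hbdd ⟨v', c', b, hc', rfl⟩⟩

end SimpleGraph.Walk

/-- Bondy–Vince: every 3-connected nonbipartite graph contains a non-separating
induced odd cycle. -/
theorem nonseparating_induced_odd_cycle {V : Type*} [Fintype V] (G : SimpleGraph V)
    (h3 : KConnected G 3) (hnb : ¬ G.Colorable 2) :
    ∃ (v : V) (c : G.Walk v v), c.IsCycle ∧ Odd c.length ∧
      (∀ a b : V, a ∈ c.support → b ∈ c.support → G.Adj a b → s(a, b) ∈ c.edges) ∧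
      (G.induce {u | u ∉ c.support}).Connected := by
  obtain ⟨u, w, hw⟩ : ∃ (u : V) (w : G.Walk u u), Odd w.length := by
    simpa [two_colorable_iff_forall_loop_even] using hnb
  obtain ⟨v₀, c₀, hc₀, -⟩ := Walk.exists_isInducedOddCycle hw
  obtain ⟨a₀, ha₀⟩ := h3.exists_notMem_support hc₀.isCycle hc₀.isChordless
  obtain ⟨v, c, a, hc, ha, hmax⟩ := Walk.exists_hasLargestComponentCompl hc₀ ha₀
  exact ⟨v, c, hc.isCycle, hc.odd_length, fun _ _ => hc.isChordless.mem_edges,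
    hmax.connected_induce h3 hc ha⟩
end

section
/- The Petersen graph has cycle spectrum exactly {5, 6, 8, 9}; in particular, it does not contain three cycles of consecutive lengths. -/
open SimpleGraph

/-- The Petersen graph as the Kneser graph K(5,2). -/
def Petersen : SimpleGraph {s : Finset (Fin 5) // s.card = 2} where
  Adj a b := Disjoint a.1 b.1
  symm := ⟨fun a b h => h.symm⟩
  loopless := by
    constructor
    intro a h
    have h2 := a.2
    have : (a.1 : Finset (Fin 5)) = (∅ : Finset (Fin 5)) := disjoint_self.mp h
    simp [this] at h2

/-!
A cycle of length `n` is the same as a list of `n ≥ 3` distinct vertices in which consecutive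
entries are adjacent and the last entry is adjacent to the first. Such lists are found by growing
simple paths one vertex at a time, so for a finite graph the cycle spectrum is a finite search.
For the Petersen graph the kernel runs this search for every `n ≤ 10`, and a cycle cannot be
longer than the number of vertices.
-/

namespace SimpleGraph

variable {V : Type*} (G : SimpleGraph V)

theorem hasCycleLength_iff_exists_list {n : ℕ} :
    HasCycleLength G n ↔
      3 ≤ n ∧ ∃ l : List V, l.length = n ∧ l.Nodup ∧ l.IsChain G.Adj ∧
        ∃ a ∈ l.head?, ∃ b ∈ l.getLast?, G.Adj b a := by
  constructor
  · rintro ⟨v, c, hc, rfl⟩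
    refine ⟨hc.three_le_length, c.support.tail, by simp, hc.support_nodup,
      c.isChain_adj_support.tail, ?_⟩
    cases c with
    | nil => simp at hc
    | @cons _ w _ h p =>
      refine ⟨w, ?_, v, ?_, h⟩
      · simp [List.head?_eq_some_head p.support_ne_nil, p.head_support]
      · simp [List.getLast?_eq_some_getLast p.support_ne_nil, p.getLast_support]
  · rintro ⟨hn, l, rfl, hnodup, hchain, a₀, ha₀, b, hb, hba⟩
    obtain ⟨a, t, rfl⟩ :=
      List.exists_cons_of_ne_nil (List.ne_nil_of_mem (List.mem_of_mem_head? ha₀))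
    obtain rfl : a = a₀ := by simpa using ha₀
    obtain rfl : (a :: t).getLast (List.cons_ne_nil a t) = b := by
      simpa [List.getLast?_eq_some_getLast] using hb
    obtain ⟨p, hp⟩ :
        ∃ p : G.Walk a ((a :: t).getLast (List.cons_ne_nil a t)), p.support = a :: t :=
      ⟨.ofSupport (a :: t) (List.cons_ne_nil a t) hchain, Walk.support_ofSupport _ _⟩
    have hlen : p.length = t.length := by simpa [hp] using p.length_support.symm
    refine ⟨_, .cons hba p, ?_, by simp [hlen]⟩
    rw [Walk.isCycle_iff_isPath_tail_and_le_length]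
    exact ⟨by simpa using Walk.IsPath.mk' (hp.symm ▸ hnodup), by simpa [hlen] using hn⟩

theorem _root_.HasCycleLength.le_card [Fintype V] {G : SimpleGraph V} {n : ℕ}
    (h : HasCycleLength G n) : n ≤ Fintype.card V := by
  obtain ⟨-, l, rfl, hl, -⟩ := (hasCycleLength_iff_exists_list G).1 h
  exact hl.length_le_card

variable [DecidableEq V] [DecidableRel G.Adj] (vs : List V)

def simplePaths : ℕ → List (List V)
  | 0 => [[]]
  | n + 1 => (simplePaths n).flatMap fun l =>
      (vs.filter fun b => b ∉ l ∧ ∀ a ∈ l.head?, G.Adj b a).map (· :: l)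

variable {G vs}

theorem cons_mem_simplePaths_succ {n : ℕ} {b : V} {l : List V} :
    b :: l ∈ G.simplePaths vs (n + 1) ↔
      l ∈ G.simplePaths vs n ∧ b ∈ vs ∧ b ∉ l ∧ ∀ a ∈ l.head?, G.Adj b a := by
  simp [simplePaths]

theorem mem_simplePaths (hvs : ∀ v, v ∈ vs) {n : ℕ} {l : List V} :
    l ∈ G.simplePaths vs n ↔ l.length = n ∧ l.Nodup ∧ l.IsChain G.Adj := by
  induction n generalizing l with
  | zero =>
    simp only [simplePaths, List.mem_singleton, List.length_eq_zero_iff]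
    exact ⟨by rintro rfl; simp, And.left⟩
  | succ n ih =>
    cases l with
    | nil => simp [simplePaths]
    | cons b r =>
      rw [cons_mem_simplePaths_succ, ih]
      simp only [List.length_cons, Nat.add_right_cancel_iff, List.nodup_cons, List.isChain_cons,
        hvs, true_and]
      tauto

theorem hasCycleLength_iff_simplePaths (hvs : ∀ v, v ∈ vs) {n : ℕ} :
    HasCycleLength G n ↔
      3 ≤ n ∧ ∃ l ∈ G.simplePaths vs n, ∃ a ∈ l.head?, ∃ b ∈ l.getLast?, G.Adj b a := by
  simp only [hasCycleLength_iff_exists_list, mem_simplePaths hvs, and_assoc]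

end SimpleGraph

instance : DecidableRel Petersen.Adj := fun a b =>
  inferInstanceAs (Decidable (Disjoint a.1 b.1))

def petersenVertices : List {s : Finset (Fin 5) // s.card = 2} :=
  [⟨{0, 1}, rfl⟩, ⟨{0, 2}, rfl⟩, ⟨{0, 3}, rfl⟩, ⟨{0, 4}, rfl⟩, ⟨{1, 2}, rfl⟩,
    ⟨{1, 3}, rfl⟩, ⟨{1, 4}, rfl⟩, ⟨{2, 3}, rfl⟩, ⟨{2, 4}, rfl⟩, ⟨{3, 4}, rfl⟩]

theorem mem_petersenVertices : ∀ v, v ∈ petersenVertices := by decide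

theorem petersen_hasCycleLength_iff_of_le_ten {n : ℕ} (hn : n ≤ 10) :
    HasCycleLength Petersen n ↔ n = 5 ∨ n = 6 ∨ n = 8 ∨ n = 9 := by
  rw [hasCycleLength_iff_simplePaths mem_petersenVertices]
  revert n
  decide +kernel

theorem petersen_hasCycleLength_iff (n : ℕ) :
    HasCycleLength Petersen n ↔ n = 5 ∨ n = 6 ∨ n = 8 ∨ n = 9 := by
  rcases le_or_gt n 10 with hn | hn
  · exact petersen_hasCycleLength_iff_of_le_ten hn
  · have hcard : Fintype.card {s : Finset (Fin 5) // s.card = 2} = 10 := by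
      rw [Fintype.card_finset_len]; rfl
    exact iff_of_false (fun h => by have := h.le_card; omega) (by omega)

/-- The cycle spectrum of the Petersen graph is exactly {5, 6, 8, 9}; in particular it
contains no three cycles of consecutive lengths. -/
theorem petersen_cycle_spectrum :
    (∀ n : ℕ, HasCycleLength Petersen n ↔ n ∈ ({5, 6, 8, 9} : Set ℕ)) ∧
      ¬ HasConsecCycles Petersen 3 := by
  refine ⟨fun n => by simpa using petersen_hasCycleLength_iff n, fun ⟨m, hm⟩ => ?_⟩
  have h₀ := (petersen_hasCycleLength_iff _).1 (hm 0 (by norm_num))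
  have h₁ := (petersen_hasCycleLength_iff _).1 (hm 1 (by norm_num))
  have h₂ := (petersen_hasCycleLength_iff _).1 (hm 2 (by norm_num))
  omega
end

section
/- Let G = K1 ∨ K_{3,3} (one vertex joined to all six vertices of the complete bipartite graph K_{3,3}), and let x be the apex vertex and y any vertex of the K_{3,3}. Then G contains three (x,y)-paths P1, P2, P3 with ||P1|| > ||P2|| > ||P3|| ≥ 2 such that either the three lengths form an arithmetic progression with common difference 2, or {||P1||-||P2||, ||P2||-||P3||} = {1,2}. -/
open SimpleGraph

/-- Three path lengths `a > b > c ≥ 2` are *good* if they form an arithmetic progression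
with common difference 2, or the two differences are `{1, 2}` in some order. -/
def GoodTriple (a b c : ℕ) : Prop :=
  2 ≤ c ∧ c < b ∧ b < a ∧
    ((a = b + 2 ∧ b = c + 2) ∨ (a = b + 1 ∧ b = c + 2) ∨ (a = b + 2 ∧ b = c + 1))
/-- The join `G ∨ H` of two graphs: their disjoint union plus all edges between them. -/
def GJoin {α β : Type*} (G : SimpleGraph α) (H : SimpleGraph β) : SimpleGraph (α ⊕ β) where
  Adj a b := match a, b with
    | .inl a, .inl b => G.Adj a b
    | .inr a, .inr b => H.Adj a b
    | _, _ => True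
  symm := ⟨by rintro (a|a) (b|b) h <;> simp_all <;> exact h.symm⟩
  loopless := ⟨by rintro (a|a) h <;> simp_all⟩

/-! The `K_{3,3}` has a Hamiltonian path, of length 5, ending at `y`; dropping its first two or
four vertices leaves paths of lengths 3 and 1 ending at `y`. Prefixing the apex `x`, which is
adjacent to every vertex of the `K_{3,3}`, turns these into `(x,y)`-paths of lengths 6, 4, 2. -/

theorem SimpleGraph.Walk.IsPath.exists_isPath_length_add_two {V : Type*} {G : SimpleGraph V}
    {u v : V} {p : G.Walk u v} (hp : p.IsPath) (h : 2 ≤ p.length) :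
    ∃ (w : V) (q : G.Walk w v), q.IsPath ∧ q.length + 2 = p.length := by
  match p, hp, h with
  | .cons _ (.cons _ q), hp, _ => exact ⟨_, q, hp.of_cons.of_cons, by simp⟩

namespace GJoin

variable {α β : Type*} (G : SimpleGraph α) (H : SimpleGraph β)

theorem adj_inl_inr (a : α) (b : β) : (GJoin G H).Adj (.inl a) (.inr b) :=
  trivial

def inrEmbedding : H ↪g GJoin G H where
  toFun := Sum.inr
  inj' := Sum.inr_injective
  map_rel_iff' := Iff.rfl

theorem exists_isPath_inl_of_isPath (a : α) {u v : β} {p : H.Walk u v} (hp : p.IsPath) :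
    ∃ q : (GJoin G H).Walk (.inl a) (.inr v), q.IsPath ∧ q.length = p.length + 1 := by
  let q : (GJoin G H).Walk (.inr u) (.inr v) := (p.map (inrEmbedding G H).toHom).copy rfl rfl
  refine ⟨.cons (adj_inl_inr G H a u) q, ?_,
    congrArg (· + 1) ((Walk.length_copy _ _ _).trans (Walk.length_map _ _))⟩
  rw [Walk.cons_isPath_iff]
  exact ⟨(Walk.isPath_copy _ _ _).mpr (hp.map (inrEmbedding G H).injective),
    by simp [q, Walk.support_map, inrEmbedding]⟩

end GJoin

namespace completeBipartiteGraph

variable {α β : Type*}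

def swapIso : completeBipartiteGraph α β ≃g completeBipartiteGraph β α where
  toEquiv := Equiv.sumComm α β
  map_rel_iff' := by rintro (a | a) (b | b) <;> simp

theorem exists_isPath_length_five_inl (f : Fin 3 ↪ α) (g : Fin 3 ↪ β) :
    ∃ (u : α ⊕ β) (p : (completeBipartiteGraph α β).Walk u (.inl (f 0))),
      p.IsPath ∧ p.length = 5 := by
  let p : (completeBipartiteGraph α β).Walk (.inr (g 0)) (.inl (f 0)) :=
    .cons (v := .inl (f 1)) (by simp) <| .cons (v := .inr (g 1)) (by simp) <|
    .cons (v := .inl (f 2)) (by simp) <| .cons (v := .inr (g 2)) (by simp) <|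
    .cons (by simp) .nil
  refine ⟨_, p, ?_, rfl⟩
  simp [p, Walk.isPath_def, f.injective.eq_iff, g.injective.eq_iff]

theorem exists_isPath_length_five_fin_three (y : Fin 3 ⊕ Fin 3) :
    ∃ (u : Fin 3 ⊕ Fin 3) (p : (completeBipartiteGraph (Fin 3) (Fin 3)).Walk u y),
      p.IsPath ∧ p.length = 5 := by
  rcases y with a | a
  · obtain ⟨u, p, hp, hlen⟩ := exists_isPath_length_five_inl (α := Fin 3) (β := Fin 3)
      (Equiv.swap 0 a).toEmbedding (.refl _)
    exact ⟨u, p.copy rfl (by simp), by simpa using hp, by simpa using hlen⟩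
  · obtain ⟨u, p, hp, hlen⟩ := exists_isPath_length_five_inl (α := Fin 3) (β := Fin 3)
      (Equiv.swap 0 a).toEmbedding (.refl _)
    exact ⟨_, (p.map swapIso.toHom).copy rfl (by simp [swapIso]),
      by simpa using hp.map swapIso.injective, by simpa⟩

end completeBipartiteGraph

/-- In `K1 ∨ K_{3,3}`, with `x` the apex and `y` any vertex of the `K_{3,3}`, there are
three good `(x,y)`-paths. -/
theorem join_K33_three_good_paths (y : Fin 3 ⊕ Fin 3) :
    ∃ (P1 P2 P3 : (GJoin (⊤ : SimpleGraph (Fin 1))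
        (completeBipartiteGraph (Fin 3) (Fin 3))).Walk (Sum.inl 0) (Sum.inr y)),
      P1.IsPath ∧ P2.IsPath ∧ P3.IsPath ∧
        GoodTriple P1.length P2.length P3.length := by
  obtain ⟨_, p₅, hp₅, hlen₅⟩ := completeBipartiteGraph.exists_isPath_length_five_fin_three y
  obtain ⟨_, p₃, hp₃, hlen₃⟩ := hp₅.exists_isPath_length_add_two (by omega)
  obtain ⟨_, p₁, hp₁, hlen₁⟩ := hp₃.exists_isPath_length_add_two (by omega)
  obtain ⟨P1, hP1, hlen1⟩ := GJoin.exists_isPath_inl_of_isPath ⊤ _ (0 : Fin 1) hp₅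
  obtain ⟨P2, hP2, hlen2⟩ := GJoin.exists_isPath_inl_of_isPath ⊤ _ (0 : Fin 1) hp₃
  obtain ⟨P3, hP3, hlen3⟩ := GJoin.exists_isPath_inl_of_isPath ⊤ _ (0 : Fin 1) hp₁
  exact ⟨P1, P2, P3, hP1, hP2, hP3, by unfold GoodTriple; omega⟩
end

section
/- Let G be a 2-connected graph and x, y two distinct vertices with x and y nonadjacent. Suppose there are two (x,y)-paths Q1, Q2 of consecutive lengths (||Q2|| = ||Q1|| + 1), both internally disjoint from a subgraph H of G, and H contains k-2 (x,y)-paths P1, ..., P_{k-2} (internally disjoint from Q1, Q2) whose lengths form an arithmetic progression with common difference 2. Then among the cycles Q_i ∪ P_j (i = 1,2; j = 1,...,k-2) there are k cycles of consecutive lengths, where k ∈ {4,5}. -/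
open SimpleGraph

open Walk in

lemma cycle_of_two_paths {V : Type*} {G : SimpleGraph V} {x y : V}
    (hxy : x ≠ y) (hadj : ¬ G.Adj x y) (p q : G.Walk x y)
    (hp : p.IsPath) (hq : q.IsPath)
    (hdisj : ∀ v ∈ p.support, v ∈ q.support → v = x ∨ v = y) :
    ∃ (c : G.Walk x x), c.IsCycle ∧ c.length = p.length + q.length := by
  refine ⟨p.append q.reverse, ?_, by simp [Walk.length_append]⟩
  have hnodupP := hp.support_nodup
  have hnodupQ := hq.support_nodup
  -- x not in p.support.tail
  have hxp : x ∉ p.support.tail := by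
    have := p.support_eq_cons
    rw [this] at hnodupP
    exact (List.nodup_cons.mp hnodupP).1
  -- y not in q.reverse.support.tail
  have hyq : y ∉ q.reverse.support.tail := by
    have h1 : q.reverse.support.Nodup := by
      rw [Walk.support_reverse]; exact (List.nodup_reverse.mpr hnodupQ)
    have := q.reverse.support_eq_cons
    rw [this] at h1
    exact (List.nodup_cons.mp h1).1
  have hsubq : ∀ v ∈ q.reverse.support.tail, v ∈ q.support := by
    intro v hv
    have : v ∈ q.reverse.support := List.mem_of_mem_tail hv
    rwa [Walk.support_reverse, List.mem_reverse] at this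
  constructor
  · constructor
    · -- IsTrail
      constructor
      rw [Walk.edges_append, Walk.edges_reverse]
      refine List.Nodup.append hp.isTrail.edges_nodup (List.nodup_reverse.mpr hq.isTrail.edges_nodup) ?_
      intro e hep heq
      rw [List.mem_reverse] at heq
      have heG : e ∈ G.edgeSet := p.edges_subset_edgeSet hep
      induction e with
      | h u v =>
        have hu : u = x ∨ u = y :=
          hdisj u (p.fst_mem_support_of_mem_edges hep) (q.fst_mem_support_of_mem_edges heq)
        have hv : v = x ∨ v = y :=
          hdisj v (p.snd_mem_support_of_mem_edges hep) (q.snd_mem_support_of_mem_edges heq)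
        have hadj' : G.Adj u v := heG
        rcases hu with rfl | rfl <;> rcases hv with rfl | rfl
        · exact hadj'.ne rfl
        · exact hadj hadj'
        · exact hadj hadj'.symm
        · exact hadj'.ne rfl
    · -- ne nil
      intro h
      have := congrArg Walk.length h
      simp only [Walk.length_append, Walk.length_nil] at this
      have hp0 : p.length = 0 := by omega
      exact hxy (Walk.eq_of_length_eq_zero hp0)
  · -- support tail nodup
    rw [Walk.tail_support_append]
    refine List.Nodup.append ?_ ?_ ?_
    · exact hnodupP.tail
    · have : q.reverse.support.Nodup := by
        rw [Walk.support_reverse]; exact (List.nodup_reverse.mpr hnodupQ)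
      exact this.tail
    · intro v hvp hvq
      have h1 : v ∈ p.support := List.mem_of_mem_tail hvp
      have h2 : v ∈ q.support := hsubq v hvq
      rcases hdisj v h1 h2 with rfl | rfl
      · exact hxp hvp
      · exact hyq hvq


/-- Combining two `(x,y)`-paths of consecutive lengths (internally avoiding a vertex set
`S`) with `k - 2` `(x,y)`-paths inside `S` whose lengths form an arithmetic progression
with difference 2 yields `k` cycles of consecutive lengths, for `k ∈ {4, 5}`. -/
theorem consec_cycles_from_paths {V : Type*} [Fintype V] (G : SimpleGraph V)
    (h2 : KConnected G 2) (x y : V) (hxy : x ≠ y) (hadj : ¬ G.Adj x y)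
    (S : Set V) (hxS : x ∈ S) (hyS : y ∈ S) (k : ℕ) (hk : k = 4 ∨ k = 5)
    (Q1 Q2 : G.Walk x y) (hQ1 : Q1.IsPath) (hQ2 : Q2.IsPath)
    (hQlen : Q2.length = Q1.length + 1)
    (hQ1int : ∀ v ∈ Q1.support, v ≠ x → v ≠ y → v ∉ S)
    (hQ2int : ∀ v ∈ Q2.support, v ≠ x → v ≠ y → v ∉ S)
    (P : Fin (k - 2) → G.Walk x y) (hP : ∀ j, (P j).IsPath)
    (hPS : ∀ j, ∀ v ∈ (P j).support, v ∈ S)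
    (a : ℕ) (ha : 2 ≤ a) (hPlen : ∀ j : Fin (k - 2), (P j).length = a + 2 * (j : ℕ)) :
    ∃ m : ℕ, ∀ t < k, HasCycleLength G (m + t) ∧
      ∃ (i : Fin 2) (j : Fin (k - 2)),
        (if i = 0 then Q1.length else Q2.length) + (P j).length = m + t := by
  refine ⟨Q1.length + a, ?_⟩
  intro t ht
  have hjlt : t / 2 < k - 2 := by rcases hk with rfl | rfl <;> omega
  set j : Fin (k - 2) := ⟨t / 2, hjlt⟩ with hj
  have hdisj1 : ∀ v ∈ Q1.support, v ∈ (P j).support → v = x ∨ v = y := by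
    intro v hv hv'
    by_contra h
    push_neg at h
    exact hQ1int v hv h.1 h.2 (hPS j v hv')
  have hdisj2 : ∀ v ∈ Q2.support, v ∈ (P j).support → v = x ∨ v = y := by
    intro v hv hv'
    by_contra h
    push_neg at h
    exact hQ2int v hv h.1 h.2 (hPS j v hv')
  have hjval : (j : ℕ) = t / 2 := rfl
  have hPj : (P j).length = a + 2 * (t / 2) := by rw [hPlen j, hjval]
  rcases Nat.even_or_odd t with he | ho
  · obtain ⟨r, hr⟩ := he
    have htd : t / 2 = r := by omega
    obtain ⟨c, hc, hlen⟩ := cycle_of_two_paths hxy hadj Q1 (P j) hQ1 (hP j) hdisj1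
    refine ⟨⟨x, c, hc, by omega⟩, 0, j, ?_⟩
    rw [if_pos rfl]
    omega
  · obtain ⟨r, hr⟩ := ho
    have htd : t / 2 = r := by omega
    obtain ⟨c, hc, hlen⟩ := cycle_of_two_paths hxy hadj Q2 (P j) hQ2 (hP j) hdisj2
    refine ⟨⟨x, c, hc, by omega⟩, 1, j, ?_⟩
    rw [if_neg (by decide)]
    omega
end
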